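/- Let n ≥ 2 be an integer, let κ_1,…,κ_{n−1} be real numbers and H := Σ_α κ_α. Then (i/(2π)^n) ∫_{ℝ^{n−1}} ( ∮_{|τ−‖ξ‖|=1} e^{−τ} · (−1/2) (‖ξ‖−τ)^{−2} ( ‖ξ‖^{−2} Σ_α κ_α ξ_α^2 − H ) dτ ) dξ = ((n−2)·Γ(n−1)·ω_{n−2}/(2(2π)^{n−1}(n−1))) · H. -/

import Mathlib

open Real Complex MeasureTheory BigOperators

/-!
The τ-integrand is `-(1/2) A e^{-τ} (τ - ‖ξ‖)^{-2}` with `A` independent of `τ`, so Cauchy's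
formula for the derivative turns the contour integral into `π i e^{-‖ξ‖} A`. In the ξ-integral
the weights `ξ_α² / ‖ξ‖²` are exchanged by coordinate permutations, which preserve the radial
factor `e^{-‖ξ‖}`; since they sum to `1`, each one integrates to `1/(n-1)` of `∫ e^{-‖ξ‖}`. The
ξ-integral is therefore `H (1/(n-1) - 1) ∫ e^{-‖ξ‖}`, and polar coordinates give
`∫ e^{-‖ξ‖} dξ = Γ(n-1) ω_{n-2}`.
-/

theorem circleIntegral_mul_sub_zpow_neg_two {f : ℂ → ℂ} {c : ℂ} {R : ℝ} (hR : 0 < R)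
    (hf : DifferentiableOn ℂ f (Metric.closedBall c R)) :
    ∮ τ in C(c, R), f τ * (c - τ) ^ (-2 : ℤ) = 2 * π * I * deriv f c := by
  rw [← smul_eq_mul _ (deriv f c), ← hf.deriv_eq_smul_circleIntegral hR]
  congr 1 with τ
  rw [smul_eq_mul, zpow_neg, ← neg_sub, even_two.neg_zpow, zpow_two, one_div, sq, mul_comm]

theorem circleIntegral_exp_neg_mul_sub_zpow_neg_two (c A : ℂ) {R : ℝ} (hR : 0 < R) :
    ∮ τ in C(c, R), cexp (-τ) * (-(1 / 2 : ℂ)) * (c - τ) ^ (-2 : ℤ) * A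
      = π * I * cexp (-c) * A := by
  have hderiv : HasDerivAt (fun τ => cexp (-τ) * (-(1 / 2 : ℂ) * A))
      (-cexp (-c) * (-(1 / 2 : ℂ) * A)) c := by
    simpa using ((hasDerivAt_neg c).cexp).mul_const (-(1 / 2 : ℂ) * A)
  have hf : Differentiable ℂ fun τ => cexp (-τ) * (-(1 / 2 : ℂ) * A) := by fun_prop
  calc ∮ τ in C(c, R), cexp (-τ) * (-(1 / 2 : ℂ)) * (c - τ) ^ (-2 : ℤ) * A
      = ∮ τ in C(c, R), cexp (-τ) * (-(1 / 2 : ℂ) * A) * (c - τ) ^ (-2 : ℤ) := by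
        congr 1 with τ; ring
    _ = π * I * cexp (-c) * A := by
        rw [circleIntegral_mul_sub_zpow_neg_two hR hf.differentiableOn, hderiv.deriv]; ring

section Radial

variable {ι : Type*} [Fintype ι]

theorem EuclideanSpace.sum_sq_div_norm_sq {ξ : EuclideanSpace ℝ ι} (hξ : ξ ≠ 0) :
    ∑ α, ξ α ^ 2 / ‖ξ‖ ^ 2 = 1 := by
  rw [← Finset.sum_div, ← EuclideanSpace.real_norm_sq_eq, div_self (by positivity)]

theorem EuclideanSpace.sq_div_norm_sq_le_one (ξ : EuclideanSpace ℝ ι) (α : ι) :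
    ξ α ^ 2 / ‖ξ‖ ^ 2 ≤ 1 := by
  refine div_le_one_of_le₀ ?_ (by positivity)
  rw [EuclideanSpace.real_norm_sq_eq]
  exact Finset.single_le_sum (fun β _ => sq_nonneg (ξ β)) (Finset.mem_univ α)

variable {g : ℝ → ℝ}

theorem integrable_radial_mul_sq_div_norm_sq
    (hg : Integrable fun ξ : EuclideanSpace ℝ ι => g ‖ξ‖) (α : ι) :
    Integrable fun ξ : EuclideanSpace ℝ ι => g ‖ξ‖ * (ξ α ^ 2 / ‖ξ‖ ^ 2) := by
  have hweight : Measurable fun ξ : EuclideanSpace ℝ ι => ξ α ^ 2 / ‖ξ‖ ^ 2 := by fun_prop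
  refine (hg.bdd_mul (c := 1) hweight.aestronglyMeasurable (.of_forall fun ξ => ?_)).congr
    (.of_forall fun ξ => mul_comm _ _)
  rw [Real.norm_of_nonneg (by positivity)]
  exact EuclideanSpace.sq_div_norm_sq_le_one ξ α

theorem integral_radial_mul_sq_div_norm_sq_swap (α β : ι) :
    ∫ ξ : EuclideanSpace ℝ ι, g ‖ξ‖ * (ξ α ^ 2 / ‖ξ‖ ^ 2)
      = ∫ ξ : EuclideanSpace ℝ ι, g ‖ξ‖ * (ξ β ^ 2 / ‖ξ‖ ^ 2) := by
  classical
  let T := LinearIsometryEquiv.piLpCongrLeft 2 ℝ ℝ (Equiv.swap α β)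
  have hT : ∀ ξ : EuclideanSpace ℝ ι, T ξ α = ξ β := fun ξ => by
    simp [T, LinearIsometryEquiv.piLpCongrLeft_apply, Equiv.piCongrLeft'_apply]
  rw [← (T.measurePreserving.integral_comp' (f := T.toMeasurableEquiv))]
  simp [T.norm_map, hT]

theorem integral_radial_mul_sq_div_norm_sq
    (hg : Integrable fun ξ : EuclideanSpace ℝ ι => g ‖ξ‖) (α : ι) :
    ∫ ξ : EuclideanSpace ℝ ι, g ‖ξ‖ * (ξ α ^ 2 / ‖ξ‖ ^ 2)
      = (∫ ξ : EuclideanSpace ℝ ι, g ‖ξ‖) / Fintype.card ι := by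
  have : Nonempty ι := ⟨α⟩
  have hsum : ∑ β : ι, ∫ ξ : EuclideanSpace ℝ ι, g ‖ξ‖ * (ξ β ^ 2 / ‖ξ‖ ^ 2)
      = ∫ ξ : EuclideanSpace ℝ ι, g ‖ξ‖ := by
    rw [← integral_finsetSum _ fun β _ => integrable_radial_mul_sq_div_norm_sq hg β]
    refine integral_congr_ae ?_
    filter_upwards [Measure.ae_ne volume 0] with ξ hξ
    rw [← Finset.mul_sum, EuclideanSpace.sum_sq_div_norm_sq hξ, mul_one]
  have hcard : (Fintype.card ι : ℝ) ≠ 0 := Nat.cast_ne_zero.2 Fintype.card_ne_zero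
  rw [← hsum, Finset.sum_congr rfl fun β _ => integral_radial_mul_sq_div_norm_sq_swap β α,
    Finset.sum_const, Finset.card_univ, nsmul_eq_mul, mul_div_cancel_left₀ _ hcard]

theorem integral_radial_mul_sum_sq_div_norm_sq_sub [Nonempty ι]
    (hg : Integrable fun ξ : EuclideanSpace ℝ ι => g ‖ξ‖) (κ : ι → ℝ) :
    ∫ ξ : EuclideanSpace ℝ ι, g ‖ξ‖ * (∑ α, κ α * (ξ α ^ 2 / ‖ξ‖ ^ 2) - ∑ α, κ α)
      = (1 / Fintype.card ι - 1) * (∑ α, κ α) * ∫ ξ : EuclideanSpace ℝ ι, g ‖ξ‖ := by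
  have hterm : ∀ α, Integrable fun ξ : EuclideanSpace ℝ ι =>
      κ α * (g ‖ξ‖ * (ξ α ^ 2 / ‖ξ‖ ^ 2)) :=
    fun α => (integrable_radial_mul_sq_div_norm_sq hg α).const_mul (κ α)
  calc ∫ ξ : EuclideanSpace ℝ ι, g ‖ξ‖ * (∑ α, κ α * (ξ α ^ 2 / ‖ξ‖ ^ 2) - ∑ α, κ α)
      = ∫ ξ : EuclideanSpace ℝ ι,
          (∑ α, κ α * (g ‖ξ‖ * (ξ α ^ 2 / ‖ξ‖ ^ 2))) - (∑ α, κ α) * g ‖ξ‖ := by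
        congr 1 with ξ
        rw [mul_sub, Finset.mul_sum, mul_comm (g ‖ξ‖) (∑ α, κ α)]
        simp only [mul_left_comm (g ‖ξ‖)]
    _ = ∑ α, κ α * ((∫ ξ : EuclideanSpace ℝ ι, g ‖ξ‖) / Fintype.card ι)
          - (∑ α, κ α) * ∫ ξ : EuclideanSpace ℝ ι, g ‖ξ‖ := by
        rw [integral_sub (integrable_finsetSum _ fun α _ => hterm α) (hg.const_mul _),
          integral_finsetSum _ fun α _ => hterm α, integral_const_mul]
        simp only [integral_const_mul, integral_radial_mul_sq_div_norm_sq hg]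
    _ = (1 / Fintype.card ι - 1) * (∑ α, κ α) * ∫ ξ : EuclideanSpace ℝ ι, g ‖ξ‖ := by
        rw [← Finset.sum_mul]
        ring

end Radial

section NormExp

open Module

variable {E : Type*} [NormedAddCommGroup E] [InnerProductSpace ℝ E] [FiniteDimensional ℝ E]
  [MeasurableSpace E] [BorelSpace E] [Nontrivial E]

theorem integrable_exp_neg_norm : Integrable fun x : E => rexp (-‖x‖) := by
  rw [integrable_fun_norm_addHaar volume (f := fun r => rexp (-r))]
  simpa [Real.rpow_natCast] using integrableOn_rpow_mul_exp_neg_rpow (p := 1)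
    (s := (finrank ℝ E - 1 : ℕ)) (neg_one_lt_zero.trans_le (Nat.cast_nonneg _)) one_pos

theorem integral_exp_neg_norm :
    ∫ x : E, rexp (-‖x‖)
      = Real.Gamma (finrank ℝ E) * (2 * π ^ ((finrank ℝ E : ℝ) / 2)
          / Real.Gamma ((finrank ℝ E : ℝ) / 2)) := by
  set d := finrank ℝ E
  have hd : (0 : ℝ) < d := Nat.cast_pos.2 finrank_pos
  have hradial : ∫ y in Set.Ioi (0 : ℝ), y ^ (d - 1) • rexp (-y) = Real.Gamma d := by
    rw [Real.Gamma_eq_integral hd]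
    refine setIntegral_congr_fun measurableSet_Ioi fun y _ => ?_
    rw [smul_eq_mul, mul_comm, ← Real.rpow_natCast, Nat.cast_sub finrank_pos, Nat.cast_one]
  have hball : volume.real (Metric.ball (0 : E) 1) = √π ^ d / Real.Gamma (d / 2 + 1) := by
    rw [measureReal_def, InnerProductSpace.volume_ball, ENNReal.ofReal_one, one_pow, one_mul,
      ENNReal.toReal_ofReal (by positivity)]
  have hsqrt : √π ^ d = π ^ ((d : ℝ) / 2) := by
    rw [Real.sqrt_eq_rpow, ← Real.rpow_natCast, ← Real.rpow_mul pi_pos.le, one_div_mul_eq_div]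
  rw [integral_fun_norm_addHaar volume fun r => rexp (-r), hradial, hball, hsqrt,
    Real.Gamma_add_one (by positivity), nsmul_eq_mul, smul_eq_mul]
  field_simp
  ring

end NormExp

/-- Step 2 of the proof of Theorem 1.1: the heat-trace coefficient
`a_1(x) = (i/(2π)^n) ∫ ∮ e^{−τ}·(−1/2)(‖ξ‖−τ)^{−2}(‖ξ‖^{−2}Σκ_αξ_α² − H) dτ dξ
        = (n−2)Γ(n−1)·ω_{n−2}·H/(2(2π)^{n−1}(n−1))`,
where `H = Σ_α κ_α` and `ω_{n−2} = 2π^{(n−1)/2}/Γ((n−1)/2)`. -/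
theorem heat_trace_coefficient_a1 (n : ℕ) (hn : 2 ≤ n) (κ : Fin (n - 1) → ℝ)
    (H : ℝ) (hH : H = ∑ α, κ α) :
    (Complex.I / (2 * (Real.pi : ℂ)) ^ n) *
      (∫ ξ : EuclideanSpace ℝ (Fin (n - 1)),
        ∮ τ in C((‖ξ‖ : ℂ), 1),
          Complex.exp (-τ) * (-(1 / 2 : ℂ)) * ((‖ξ‖ : ℂ) - τ) ^ (-2 : ℤ) *
            ((‖ξ‖ : ℂ) ^ (-2 : ℤ) * (∑ α, (κ α : ℂ) * (ξ α : ℂ) ^ 2) - (H : ℂ)))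
    = (((n : ℝ) - 2) * Real.Gamma ((n : ℝ) - 1) *
          (2 * Real.pi ^ (((n : ℝ) - 1) / 2) / Real.Gamma (((n : ℝ) - 1) / 2)) /
          (2 * (2 * Real.pi) ^ (n - 1) * ((n : ℝ) - 1)) * H : ℝ) := by
  obtain ⟨m, rfl⟩ : ∃ m, n = m + 1 := ⟨n - 1, by omega⟩
  have : Nonempty (Fin (m + 1 - 1)) := ⟨⟨0, by omega⟩⟩
  have hcontour : ∀ ξ : EuclideanSpace ℝ (Fin (m + 1 - 1)),
      (∮ τ in C((‖ξ‖ : ℂ), 1),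
          Complex.exp (-τ) * (-(1 / 2 : ℂ)) * ((‖ξ‖ : ℂ) - τ) ^ (-2 : ℤ) *
            ((‖ξ‖ : ℂ) ^ (-2 : ℤ) * (∑ α, (κ α : ℂ) * (ξ α : ℂ) ^ 2) - (H : ℂ)))
        = π * I * ↑(rexp (-‖ξ‖) * (∑ α, κ α * (ξ α ^ 2 / ‖ξ‖ ^ 2) - ∑ α, κ α)) := by
    intro ξ
    rw [circleIntegral_exp_neg_mul_sub_zpow_neg_two _ _ one_pos, hH]
    push_cast
    simp only [Finset.mul_sum, zpow_neg, zpow_ofNat, div_eq_mul_inv]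
    ring_nf
  simp only [hcontour, integral_const_mul, integral_complex_ofReal]
  rw [integral_radial_mul_sum_sq_div_norm_sq_sub (g := fun r => rexp (-r))
      integrable_exp_neg_norm, integral_exp_neg_norm, finrank_euclideanSpace, Fintype.card_fin,
    ← hH, Nat.add_sub_cancel, pow_succ]
  have hm : 0 < m := by omega
  have hmC : (m : ℂ) ≠ 0 := by exact_mod_cast hm.ne'
  have hΓ : (Real.Gamma (m / 2) : ℂ) ≠ 0 :=
    ofReal_ne_zero.2 (Real.Gamma_pos_of_pos (by positivity)).ne'
  push_cast [add_sub_cancel_right]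
  field_simp
  linear_combination (H * Real.Gamma m * (1 - m) : ℂ) * I_sq
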